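/- arXiv:1702.07150 — 4 statements merged into one kernel-verified Lean document; each statement's English description precedes it below -/
import Mathlib

section
/- Let Q̲ be a lower transition rate operator on functions f : 𝒳 → ℝ for a finite set 𝒳, and let δ ≥ 0. Then the operator I + δQ̲ is a lower transition operator if and only if δ·‖Q̲‖ ≤ 2, where ‖Q̲‖ is the operator norm induced by the maximum norm. -/
/-!
Write `c x := Q 1_x (x) ≤ 0`. Splitting `f - min f ≥ 0` into its value at `x` times `1_x` plus
a non-negative function vanishing at `x`, the axioms give the two-sided bound
`(f x - min f) c x ≤ Q f x ≤ (f x - max f) c x`. Hence `‖Q‖ = 2 max_x (-c x)`, attained at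
`2·1_x - 1`, and `I + δQ` dominates the minimum exactly when `δ (-c x) ≤ 1` for every `x`:
the bound gives sufficiency, and evaluating at `1_x` gives necessity.
-/

open scoped BigOperators

variable {X : Type*} [Fintype X] [Nonempty X] [DecidableEq X]

/-- The maximum norm on real-valued functions on a finite state space. -/
noncomputable def maxNorm (f : X → ℝ) : ℝ := ⨆ x, |f x|

/-- The variation seminorm `max f - min f`. -/
noncomputable def varNorm (f : X → ℝ) : ℝ := (⨆ x, f x) - (⨅ x, f x)

/-- The centred seminorm `(max f - min f)/2`. -/
noncomputable def centNorm (f : X → ℝ) : ℝ := ((⨆ x, f x) - (⨅ x, f x)) / 2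

/-- Indicator function of the singleton `{x}`. -/
def indic (x : X) : X → ℝ := fun y => if y = x then 1 else 0

/-- A lower transition operator: dominates the minimum, is superadditive,
and is non-negatively homogeneous. -/
def IsLTO (T : (X → ℝ) → (X → ℝ)) : Prop :=
  (∀ f x, (⨅ y, f y) ≤ T f x) ∧
  (∀ f g x, T f x + T g x ≤ T (f + g) x) ∧
  (∀ (μ : ℝ), 0 ≤ μ → ∀ f, T (μ • f) = μ • T f)

/-- A lower transition rate operator: vanishes on constants, is superadditive,
is non-negatively homogeneous, and is non-negative off the diagonal on indicators. -/
def IsLTRO (Q : (X → ℝ) → (X → ℝ)) : Prop :=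
  (∀ γ : ℝ, Q (fun _ => γ) = 0) ∧
  (∀ f g x, Q f x + Q g x ≤ Q (f + g) x) ∧
  (∀ (μ : ℝ), 0 ≤ μ → ∀ f, Q (μ • f) = μ • Q f) ∧
  (∀ x y, x ≠ y → 0 ≤ Q (indic x) y)

/-- Operator norm induced by the maximum norm. -/
noncomputable def opNorm (A : (X → ℝ) → (X → ℝ)) : ℝ :=
  sSup {r | ∃ f : X → ℝ, maxNorm f = 1 ∧ r = maxNorm (A f)}

/-- The (weak) coefficient of ergodicity. -/
noncomputable def coeffErg (A : (X → ℝ) → (X → ℝ)) : ℝ :=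
  sSup {r | ∃ f : X → ℝ, (∀ x, 0 ≤ f x ∧ f x ≤ 1) ∧ r = varNorm (A f)}

section MaxNorm

omit [DecidableEq X]

omit [Nonempty X] in
theorem abs_le_maxNorm (f : X → ℝ) (x : X) : |f x| ≤ maxNorm f :=
  le_ciSup (f := fun x => |f x|) (Finite.bddAbove_range _) x

theorem varNorm_le_two_of_maxNorm_eq_one {f : X → ℝ} (hf : maxNorm f = 1) : varNorm f ≤ 2 := by
  have hf' : ∀ y, |f y| ≤ 1 := fun y => hf ▸ abs_le_maxNorm f y
  have hM : (⨆ y, f y) ≤ 1 := ciSup_le fun y => (abs_le.mp (hf' y)).2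
  have hm : -1 ≤ ⨅ y, f y := le_ciInf fun y => (abs_le.mp (hf' y)).1
  unfold varNorm
  linarith

omit [Fintype X] in
theorem opNorm_le {A : (X → ℝ) → (X → ℝ)} {c : ℝ}
    (hA : ∀ f, maxNorm f = 1 → maxNorm (A f) ≤ c) : opNorm A ≤ c := by
  refine csSup_le ⟨_, fun _ => 1, by simp [maxNorm], rfl⟩ ?_
  rintro r ⟨f, hf, rfl⟩
  exact hA f hf

omit [Fintype X] [Nonempty X] in
theorem le_opNorm {A : (X → ℝ) → (X → ℝ)} {c : ℝ}
    (hA : ∀ f, maxNorm f = 1 → maxNorm (A f) ≤ c) {f : X → ℝ} (hf : maxNorm f = 1) :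
    maxNorm (A f) ≤ opNorm A := by
  refine le_csSup ⟨c, ?_⟩ ⟨f, hf, rfl⟩
  rintro r ⟨g, hg, rfl⟩
  exact hA g hg

end MaxNorm

namespace IsLTRO

variable {Q : (X → ℝ) → (X → ℝ)}

section

omit [Nonempty X]

omit [Fintype X] in
theorem map_const (hQ : IsLTRO Q) (γ : ℝ) : Q (fun _ => γ) = 0 := hQ.1 γ

omit [Fintype X] in
theorem map_zero (hQ : IsLTRO Q) : Q 0 = 0 := hQ.map_const 0

omit [Fintype X] in
theorem add_apply_le (hQ : IsLTRO Q) (f g : X → ℝ) (x : X) : Q f x + Q g x ≤ Q (f + g) x :=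
  hQ.2.1 f g x

omit [Fintype X] in
theorem map_smul (hQ : IsLTRO Q) {μ : ℝ} (hμ : 0 ≤ μ) (f : X → ℝ) : Q (μ • f) = μ • Q f :=
  hQ.2.2.1 μ hμ f

omit [Fintype X] in
theorem apply_indic_nonneg (hQ : IsLTRO Q) {x y : X} (hxy : x ≠ y) : 0 ≤ Q (indic x) y :=
  hQ.2.2.2 x y hxy

omit [Fintype X] in
theorem map_add_const (hQ : IsLTRO Q) (f : X → ℝ) (γ : ℝ) : Q (f + fun _ => γ) = Q f := by
  funext x
  apply le_antisymm
  · have h := hQ.add_apply_le (f + fun _ => γ) (fun _ => -γ) x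
    rw [show (f + fun _ => γ) + (fun _ => -γ) = f by funext; simp, hQ.map_const] at h
    simpa using h
  · simpa [hQ.map_const γ] using hQ.add_apply_le f (fun _ => γ) x

omit [Fintype X] in
theorem sum_apply_le (hQ : IsLTRO Q) {ι : Type*} (s : Finset ι) (g : ι → X → ℝ) (x : X) :
    ∑ i ∈ s, Q (g i) x ≤ Q (∑ i ∈ s, g i) x := by
  induction s using Finset.cons_induction with
  | empty => simp [hQ.map_zero]
  | cons a s ha ih =>
    rw [Finset.sum_cons, Finset.sum_cons]
    exact (add_le_add le_rfl ih).trans (hQ.add_apply_le _ _ x)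

theorem apply_nonneg_of_nonneg (hQ : IsLTRO Q) {h : X → ℝ} (hh : 0 ≤ h) {x : X}
    (hx : h x = 0) : 0 ≤ Q h x := by
  have hdecomp : h = ∑ y, h y • indic y := by
    funext z
    simp [indic]
  rw [hdecomp]
  refine le_trans (Finset.sum_nonneg fun y _ => ?_) (hQ.sum_apply_le Finset.univ _ x)
  rw [hQ.map_smul (hh y)]
  obtain rfl | hyx := eq_or_ne y x
  · simp [hx]
  · exact mul_nonneg (hh y) (hQ.apply_indic_nonneg hyx)

theorem apply_indic_self_nonpos (hQ : IsLTRO Q) (x : X) : Q (indic x) x ≤ 0 := by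
  have hrest : 0 ≤ Q (fun y => 1 - indic x y) x :=
    hQ.apply_nonneg_of_nonneg (fun y => by by_cases y = x <;> simp [indic, *])
      (by simp [indic])
  have h := hQ.add_apply_le (indic x) (fun y => 1 - indic x y) x
  rw [show indic x + (fun y => 1 - indic x y) = fun _ => (1 : ℝ) by funext; simp,
    hQ.map_const] at h
  simp only [Pi.zero_apply] at h
  linarith

theorem mul_apply_indic_self_le (hQ : IsLTRO Q) {f : X → ℝ} (hf : 0 ≤ f) (x : X) :
    f x * Q (indic x) x ≤ Q f x := by
  set g : X → ℝ := fun y => f y - f x * indic x y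
  have hg : 0 ≤ g := fun y => by
    have hfy : 0 ≤ f y := hf y
    by_cases hyx : y = x <;> simp [g, indic, hyx, hfy]
  have hrest : 0 ≤ Q g x := hQ.apply_nonneg_of_nonneg hg (by simp [g, indic])
  have h := hQ.add_apply_le (f x • indic x) g x
  rw [show f x • indic x + g = f by funext; simp [g], hQ.map_smul (hf x)] at h
  simp only [Pi.smul_apply, smul_eq_mul] at h
  linarith

theorem sub_iInf_mul_le (hQ : IsLTRO Q) (f : X → ℝ) (x : X) :
    (f x - ⨅ y, f y) * Q (indic x) x ≤ Q f x := by
  have hshift : Q (f + fun _ => -⨅ y, f y) = Q f := hQ.map_add_const f _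
  have hnonneg : 0 ≤ f + fun _ => -⨅ y, f y := fun y => by
    simpa [← sub_eq_add_neg] using ciInf_le (Finite.bddBelow_range f) y
  simpa [hshift, ← sub_eq_add_neg] using hQ.mul_apply_indic_self_le hnonneg x

theorem le_sub_iSup_mul (hQ : IsLTRO Q) (f : X → ℝ) (x : X) :
    Q f x ≤ (f x - ⨆ y, f y) * Q (indic x) x := by
  have hshift : Q (-f + fun _ => ⨆ y, f y) = Q (-f) := hQ.map_add_const (-f) _
  have hnonneg : 0 ≤ -f + fun _ => ⨆ y, f y := fun y => by
    simpa [neg_add_eq_sub] using le_ciSup (Finite.bddAbove_range f) y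
  have hlower := hshift ▸ hQ.mul_apply_indic_self_le hnonneg x
  have hcancel := hQ.add_apply_le f (-f) x
  rw [add_neg_cancel, hQ.map_zero] at hcancel
  simp only [Pi.add_apply, Pi.neg_apply, Pi.zero_apply] at hlower hcancel
  linarith

theorem abs_apply_le (hQ : IsLTRO Q) (f : X → ℝ) (x : X) :
    |Q f x| ≤ varNorm f * -Q (indic x) x := by
  have hc := hQ.apply_indic_self_nonpos x
  have hlower := hQ.sub_iInf_mul_le f x
  have hupper := hQ.le_sub_iSup_mul f x
  have hm : (⨅ y, f y) ≤ f x := ciInf_le (Finite.bddBelow_range f) x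
  have hM : f x ≤ ⨆ y, f y := le_ciSup (Finite.bddAbove_range f) x
  unfold varNorm
  rw [abs_le]
  constructor <;> nlinarith

end

theorem opNorm_eq (hQ : IsLTRO Q) : opNorm Q = 2 * ⨆ x, -Q (indic x) x := by
  have hbound : ∀ f, maxNorm f = 1 → maxNorm (Q f) ≤ 2 * ⨆ x, -Q (indic x) x := by
    intro f hf
    refine ciSup_le fun x => (hQ.abs_apply_le f x).trans ?_
    have hc : 0 ≤ -Q (indic x) x := neg_nonneg.mpr (hQ.apply_indic_self_nonpos x)
    exact mul_le_mul (varNorm_le_two_of_maxNorm_eq_one hf)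
      (le_ciSup (Finite.bddAbove_range fun x => -Q (indic x) x) x) hc zero_le_two
  refine le_antisymm (opNorm_le hbound) ?_
  obtain ⟨x, hx⟩ := Finite.exists_max fun x => -Q (indic x) x
  set f : X → ℝ := (2 : ℝ) • indic x + fun _ => -1
  have hf : maxNorm f = 1 := by
    have habs : (fun y => |f y|) = fun _ => 1 := by
      funext y
      by_cases hyx : y = x <;> norm_num [f, indic, hyx]
    simp only [maxNorm, habs, ciSup_const]
  have hQf : Q f x = 2 * Q (indic x) x := by
    simp only [f, hQ.map_add_const, hQ.map_smul zero_le_two, Pi.smul_apply, smul_eq_mul]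
  calc 2 * ⨆ y, -Q (indic y) y ≤ 2 * -Q (indic x) x := by gcongr; exact ciSup_le hx
    _ ≤ |Q f x| := by rw [hQf]; linarith [neg_abs_le (2 * Q (indic x) x)]
    _ ≤ maxNorm (Q f) := abs_le_maxNorm _ x
    _ ≤ opNorm Q := le_opNorm hbound hf

theorem isLTO_add_smul_iff (hQ : IsLTRO Q) {δ : ℝ} (hδ : 0 ≤ δ) :
    IsLTO (fun f => f + δ • Q f) ↔ ∀ x, δ * -Q (indic x) x ≤ 1 := by
  constructor
  · intro hT x
    have h := hT.1 (indic x) x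
    have hmin : (0 : ℝ) ≤ ⨅ y, indic x y := le_ciInf fun y => by
      by_cases y = x <;> simp [indic, *]
    have hx : indic x x = 1 := if_pos rfl
    simp only [Pi.add_apply, Pi.smul_apply, smul_eq_mul, hx] at h
    linarith
  · intro hrate
    refine ⟨fun f x => ?_, fun f g x => ?_, fun μ hμ f => ?_⟩
    · have hlower := mul_le_mul_of_nonneg_left (hQ.sub_iInf_mul_le f x) hδ
      have hm : 0 ≤ f x - ⨅ y, f y := sub_nonneg.mpr (ciInf_le (Finite.bddBelow_range f) x)
      have hdiag := mul_le_mul_of_nonneg_left (hrate x) hm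
      simp only [Pi.add_apply, Pi.smul_apply, smul_eq_mul]
      linarith
    · have h := mul_le_mul_of_nonneg_left (hQ.add_apply_le f g x) hδ
      simp only [Pi.add_apply, Pi.smul_apply, smul_eq_mul] at h ⊢
      linarith
    · change μ • f + δ • Q (μ • f) = μ • (f + δ • Q f)
      rw [hQ.map_smul hμ f, smul_add, smul_comm μ δ]

end IsLTRO

theorem stmt0 (Q : (X → ℝ) → (X → ℝ)) (hQ : IsLTRO Q) (δ : ℝ) (hδ : 0 ≤ δ) :
    IsLTO (fun f => f + δ • Q f) ↔ δ * opNorm Q ≤ 2 := by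
  rw [hQ.isLTO_add_smul_iff hδ, hQ.opNorm_eq, mul_left_comm, Real.mul_iSup_of_nonneg hδ,
    ← ciSup_le_iff (Finite.bddAbove_range _)]
  exact (mul_le_iff_le_one_right zero_lt_two).symm
end

section
/- Let T̲ be a lower transition operator on a finite state space and define its coefficient of ergodicity β(T̲) := max{‖T̲f‖_v : f ∈ ℒ(𝒳), 0 ≤ f ≤ 1}. Then 0 ≤ β(T̲) ≤ 1, and for every f ∈ ℒ(𝒳), ‖T̲f‖_v ≤ β(T̲)·‖f‖_v. -/
open scoped BigOperators

variable {X : Type*} [Fintype X] [Nonempty X] [DecidableEq X]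

/-!
A `[0, 1]`-valued function `f` has `min f ≤ T̲ f ≤ max f`, so `‖T̲ f‖_v ≤ 1`. A general `f` is
`‖f‖_v • g + min f` with `g` valued in `[0, 1]`; since `T̲` commutes with non-negative scaling
and with adding constants, `‖T̲ f‖_v = ‖f‖_v * ‖T̲ g‖_v ≤ ‖f‖_v * β(T̲)`.
-/

section VariationSeminorm

omit [DecidableEq X]

lemma varNorm_nonneg (f : X → ℝ) : 0 ≤ varNorm f :=
  sub_nonneg.2 <| (Finite.ciInf_le f (Classical.arbitrary X)).trans (Finite.le_ciSup f _)

omit [Fintype X] in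
lemma varNorm_le_sub {f : X → ℝ} {a b : ℝ} (ha : ∀ x, a ≤ f x) (hb : ∀ x, f x ≤ b) :
    varNorm f ≤ b - a :=
  sub_le_sub (ciSup_le hb) (le_ciInf ha)

lemma varNorm_smul_add_const {a : ℝ} (ha : 0 ≤ a) (g : X → ℝ) (c : ℝ) :
    varNorm (a • g + fun _ => c) = a * varNorm g := by
  have hmono : Monotone fun t : ℝ => a * t + c := (monotone_id.const_mul ha).add_const c
  have hsup := Finite.map_iSup_of_monotoneOn (hmono.monotoneOn Set.univ)
    fun x => Set.mem_univ (g x)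
  have hinf := Finite.map_iInf_of_monotoneOn (hmono.monotoneOn Set.univ)
    fun x => Set.mem_univ (g x)
  simp only [varNorm, Pi.add_apply, Pi.smul_apply, smul_eq_mul, ← hsup, ← hinf]
  ring

lemma exists_unitInterval_smul_add_const (f : X → ℝ) :
    ∃ g : X → ℝ, (∀ x, 0 ≤ g x ∧ g x ≤ 1) ∧ f = varNorm f • g + fun _ => ⨅ y, f y := by
  set v := varNorm f
  set m := ⨅ y, f y
  have hlow : ∀ x, 0 ≤ f x - m := fun x => sub_nonneg.2 (Finite.ciInf_le f x)
  have hupp : ∀ x, f x - m ≤ v := fun x => sub_le_sub_right (Finite.le_ciSup f x) m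
  refine ⟨fun x => (f x - m) / v, fun x => ⟨div_nonneg (hlow x) (varNorm_nonneg f),
    div_le_one_of_le₀ (hupp x) (varNorm_nonneg f)⟩, funext fun x => ?_⟩
  simp only [Pi.add_apply, Pi.smul_apply, smul_eq_mul]
  rcases eq_or_ne v 0 with hv | hv
  · have := le_antisymm (hv ▸ hupp x) (hlow x)
    rw [hv]
    linarith
  · rw [mul_div_cancel₀ _ hv]
    ring

end VariationSeminorm

namespace IsLTO

omit [DecidableEq X]

variable {T : (X → ℝ) → (X → ℝ)} (hT : IsLTO T)
include hT

omit [Fintype X] [Nonempty X] in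
lemma map_zero : T 0 = 0 := by
  simpa using hT.2.2 0 le_rfl 0

/-- Conjugacy: superadditivity and `T 0 = 0` give `T f ≤ -T (-f) ≤ max f`. -/
lemma apply_le_ciSup (f : X → ℝ) (x : X) : T f x ≤ ⨆ y, f y := by
  have hsum : T f x + T (-f) x ≤ 0 := by
    simpa [hT.map_zero] using hT.2.1 f (-f) x
  have hneg : -(⨆ y, f y) ≤ T (-f) x := calc
    -(⨆ y, f y) ≤ ⨅ y, (-f) y := le_ciInf fun y => neg_le_neg (Finite.le_ciSup f y)
    _ ≤ T (-f) x := hT.1 (-f) x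
  linarith

lemma apply_const (c : ℝ) (x : X) : T (fun _ => c) x = c :=
  le_antisymm ((hT.apply_le_ciSup _ x).trans_eq ciSup_const)
    (ciInf_const.symm.trans_le (hT.1 _ x))

lemma map_add_const (f : X → ℝ) (c : ℝ) : T (f + fun _ => c) = T f + fun _ => c := by
  funext x
  have hup := hT.2.1 f (fun _ => c) x
  have hdown := hT.2.1 (f + fun _ => c) (fun _ => -c) x
  rw [show (f + fun _ => c) + (fun _ => -c) = f by funext; simp] at hdown
  rw [hT.apply_const] at hup hdown
  simp only [Pi.add_apply]
  linarith

lemma map_smul_add_const {a : ℝ} (ha : 0 ≤ a) (g : X → ℝ) (c : ℝ) :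
    T (a • g + fun _ => c) = a • T g + fun _ => c := by
  rw [hT.map_add_const, hT.2.2 a ha]

lemma varNorm_apply_le_one {f : X → ℝ} (hf : ∀ x, 0 ≤ f x ∧ f x ≤ 1) : varNorm (T f) ≤ 1 := by
  simpa using varNorm_le_sub
    (fun x => (le_ciInf fun y => (hf y).1).trans (hT.1 f x))
    (fun x => (hT.apply_le_ciSup f x).trans (ciSup_le fun y => (hf y).2))

lemma bddAbove_coeffErg_set :
    BddAbove {r | ∃ f : X → ℝ, (∀ x, 0 ≤ f x ∧ f x ≤ 1) ∧ r = varNorm (T f)} := by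
  refine ⟨1, ?_⟩
  rintro _ ⟨f, hf, rfl⟩
  exact hT.varNorm_apply_le_one hf

lemma varNorm_apply_le_coeffErg {f : X → ℝ} (hf : ∀ x, 0 ≤ f x ∧ f x ≤ 1) :
    varNorm (T f) ≤ coeffErg T :=
  le_csSup hT.bddAbove_coeffErg_set ⟨f, hf, rfl⟩

lemma coeffErg_nonneg : 0 ≤ coeffErg T :=
  (varNorm_nonneg _).trans (hT.varNorm_apply_le_coeffErg (f := 0) fun _ => ⟨le_rfl, zero_le_one⟩)

lemma coeffErg_le_one : coeffErg T ≤ 1 :=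
  csSup_le ⟨_, 0, fun _ => ⟨le_rfl, zero_le_one⟩, rfl⟩ fun _ ⟨_, hf, hr⟩ =>
    hr ▸ hT.varNorm_apply_le_one hf

end IsLTO

theorem stmt11 (T : (X → ℝ) → (X → ℝ)) (hT : IsLTO T) :
    0 ≤ coeffErg T ∧ coeffErg T ≤ 1 ∧
    ∀ f : X → ℝ, varNorm (T f) ≤ coeffErg T * varNorm f := by
  refine ⟨hT.coeffErg_nonneg, hT.coeffErg_le_one, fun f => ?_⟩
  obtain ⟨g, hg, hfg⟩ := exists_unitInterval_smul_add_const f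
  calc varNorm (T f)
      = varNorm f * varNorm (T g) := by
        conv_lhs => rw [hfg, hT.map_smul_add_const (varNorm_nonneg f),
          varNorm_smul_add_const (varNorm_nonneg f)]
    _ ≤ varNorm f * coeffErg T :=
        mul_le_mul_of_nonneg_left (hT.varNorm_apply_le_coeffErg hg) (varNorm_nonneg f)
    _ = coeffErg T * varNorm f := mul_comm _ _
end

section
/- Let T̲ be a lower transition operator on a finite state space 𝒳 of cardinality at least 2, with conjugate T̄f := −T̲(−f). Then the coefficient of ergodicity β(T̲) := max{‖T̲f‖_v : 0 ≤ f ≤ 1} satisfies max{[T̲ 1_A](x) − [T̲ 1_A](y) : x,y ∈ 𝒳, ∅ ≠ A ⊊ 𝒳} ≤ β(T̲) ≤ max{[T̄ 1_A](x) − [T̲ 1_A](y) : x,y ∈ 𝒳, ∅ ≠ A ⊊ 𝒳}. -/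
open scoped BigOperators

variable {X : Type*} [Fintype X] [Nonempty X] [DecidableEq X]

lemma lto_zero {T : (X → ℝ) → (X → ℝ)} (hT : IsLTO T) : T 0 = 0 := by
  have h := hT.2.2 0 le_rfl 0
  simpa using h

lemma lto_conj {T : (X → ℝ) → (X → ℝ)} (hT : IsLTO T) (f : X → ℝ) (x : X) :
    T f x ≤ -T (-f) x := by
  have h := hT.2.1 f (-f) x
  rw [add_neg_cancel, lto_zero hT] at h
  simp only [Pi.zero_apply] at h
  linarith

lemma lto_ge_inf {T : (X → ℝ) → (X → ℝ)} (hT : IsLTO T) (f : X → ℝ) (x : X)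
    {c : ℝ} (hc : ∀ z, c ≤ f z) : c ≤ T f x :=
  le_trans (le_ciInf hc) (hT.1 f x)

/-- Key induction: sublinear bound via layer-cake decomposition. -/
lemma key_aux {T : (X → ℝ) → (X → ℝ)} (hT : IsLTO T) {M : ℝ} (hM : 0 ≤ M)
    (hA : ∀ (A : Finset X) (x y : X), A.Nonempty → A ≠ Finset.univ →
      -T (-(fun z => if z ∈ A then (1:ℝ) else 0)) x
        - T (fun z => if z ∈ A then 1 else 0) y ≤ M)
    (x y : X) :
    ∀ n (f : X → ℝ), (Finset.image f Finset.univ).card ≤ n → (∀ z, 0 ≤ f z) →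
      -T (-f) x - T f y ≤ ((⨆ z, f z) - (⨅ z, f z)) * M := by
  classical
  intro n
  induction n with
  | zero =>
      intro f hcard _
      exfalso
      have h := Finset.card_pos.2 ((Finset.univ_nonempty).image f)
      omega
  | succ n ih =>
      intro f hcard hf
      by_cases hconst : ∀ z w : X, f z = f w
      · -- constant case
        obtain ⟨z0⟩ := (inferInstance : Nonempty X)
        set c := f z0 with hc
        have hfe : ∀ z, f z = c := fun z => hconst z z0
        have h1 : T f y ≥ c := lto_ge_inf hT f y (fun z => (hfe z).ge)
        have h2 : T (-f) x ≥ -c := lto_ge_inf hT (-f) x (fun z => by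
          simp [hfe z])
        have hsup : (⨆ z, f z) ≤ c := ciSup_le fun z => (hfe z).le
        have hinf : c ≤ ⨅ z, f z := le_ciInf fun z => (hfe z).ge
        nlinarith [ciInf_le (Finite.bddBelow_range f) z0,
          le_ciSup (Finite.bddAbove_range f) z0]
      · push_neg at hconst
        obtain ⟨z0, hz0⟩ := Finite.exists_min f
        set m := ⨅ z, f z with hm
        have hmz0 : m = f z0 :=
          le_antisymm (ciInf_le (Finite.bddBelow_range f) z0) (le_ciInf hz0)
        have hm0 : 0 ≤ m := hmz0 ▸ hf z0
        set A : Finset X := Finset.univ.filter (fun z => m < f z) with hAdef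
        have hmemA : ∀ z, z ∈ A ↔ m < f z := by
          intro z; simp [hAdef]
        have hAne : A.Nonempty := by
          obtain ⟨z1, w1, hzw⟩ := hconst
          rcases lt_or_ge (f w1) (f z1) with h | h
          · exact ⟨z1, (hmemA z1).2 (lt_of_le_of_lt (hmz0 ▸ hz0 w1) h)⟩
          · exact ⟨w1, (hmemA w1).2
              (lt_of_le_of_lt (hmz0 ▸ hz0 z1) (lt_of_le_of_ne h hzw))⟩
        have hAprop : A ≠ Finset.univ := by
          intro h
          have : m < f z0 := (hmemA z0).1 (h ▸ Finset.mem_univ z0)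
          exact absurd hmz0 (ne_of_lt this)
        obtain ⟨a0, ha0A, ha0min⟩ := A.exists_min_image f hAne
        have hma0 : m < f a0 := (hmemA a0).1 ha0A
        set δ : ℝ := f a0 - m with hδdef
        have hδpos : 0 < δ := by simp [hδdef]; linarith
        set g : X → ℝ := fun z => f z - δ * (if z ∈ A then 1 else 0) with hgdef
        have hfz_notA : ∀ z, z ∉ A → f z = m := by
          intro z hz
          have := (hmemA z).not.1 hz
          push_neg at this
          exact le_antisymm this (hmz0 ▸ hz0 z)
        have hgm : ∀ z, m ≤ g z := by
          intro z
          by_cases hz : z ∈ A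
          · have := ha0min z hz
            simp only [hgdef, hz, if_true]
            linarith
          · simp only [hgdef, hz, if_false]
            rw [hfz_notA z hz]; linarith
        have hg0 : ∀ z, 0 ≤ g z := fun z => le_trans hm0 (hgm z)
        -- cardinality decreases
        have hmmem : m ∈ Finset.image f Finset.univ := by
          rw [hmz0]; exact Finset.mem_image_of_mem f (Finset.mem_univ z0)
        have hsub : Finset.image g Finset.univ ⊆
            ((Finset.image f Finset.univ).erase m).image (fun v => v - δ) := by
          intro v hv
          obtain ⟨z, _, rfl⟩ := Finset.mem_image.1 hv
          by_cases hz : z ∈ A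
          · refine Finset.mem_image.2 ⟨f z, ?_, by simp [hgdef, hz]⟩
            exact Finset.mem_erase.2 ⟨(ne_of_lt ((hmemA z).1 hz)).symm,
              Finset.mem_image_of_mem f (Finset.mem_univ z)⟩
          · refine Finset.mem_image.2 ⟨f a0, ?_, ?_⟩
            · exact Finset.mem_erase.2 ⟨(ne_of_lt hma0).symm,
                Finset.mem_image_of_mem f (Finset.mem_univ a0)⟩
            · simp [hgdef, hz, hfz_notA z hz]; linarith
        have hcard' : (Finset.image g Finset.univ).card ≤ n := by
          have h1 := Finset.card_le_card hsub
          have h2 := Finset.card_image_le (s := (Finset.image f Finset.univ).erase m)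
            (f := fun v => v - δ)
          have h3 := Finset.card_erase_of_mem hmmem
          omega
        have ihg := ih g hcard' hg0
        -- sup/inf comparisons
        have hsupf : ∀ z, f z ≤ ⨆ w, f w := fun z =>
          le_ciSup (Finite.bddAbove_range f) z
        have hsupg : (⨆ z, g z) ≤ (⨆ z, f z) - δ := by
          apply ciSup_le
          intro z
          by_cases hz : z ∈ A
          · simp only [hgdef, hz, if_true]
            have := hsupf z; linarith
          · simp only [hgdef, hz, if_false]
            rw [hfz_notA z hz]
            have := hsupf a0; linarith
        have hinfg : m ≤ ⨅ z, g z := le_ciInf hgm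
        -- superadditivity decomposition
        set indA : X → ℝ := fun z => if z ∈ A then 1 else 0 with hindA
        have hfg : f = g + δ • indA := by
          funext z
          simp only [Pi.add_apply, Pi.smul_apply, smul_eq_mul, hgdef, hindA]
          ring
        have hnfg : -f = -g + δ • (-indA) := by
          rw [hfg]; funext z; simp; ring
        have hTsmul : ∀ h : X → ℝ, ∀ w, T (δ • h) w = δ * T h w := by
          intro h w
          rw [hT.2.2 δ hδpos.le h]
          simp
        have hTf : T g y + δ * T indA y ≤ T f y := by
          have := hT.2.1 g (δ • indA) y
          rw [← hfg, hTsmul] at this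
          exact this
        have hTnf : T (-g) x + δ * T (-indA) x ≤ T (-f) x := by
          have := hT.2.1 (-g) (δ • (-indA)) x
          rw [← hnfg, hTsmul] at this
          exact this
        have hAbd := hA A x y hAne hAprop
        calc -T (-f) x - T f y
            ≤ (-T (-g) x - T g y) + δ * (-T (-indA) x - T indA y) := by linarith
          _ ≤ ((⨆ z, g z) - (⨅ z, g z)) * M + δ * M := by
              have h1 : -T (-indA) x - T indA y ≤ M := hAbd
              have h2 := mul_le_mul_of_nonneg_left h1 hδpos.le
              linarith
          _ ≤ (((⨆ z, f z) - δ) - m) * M + δ * M := by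
              have : (⨆ z, g z) - (⨅ z, g z) ≤ ((⨆ z, f z) - δ) - m := by linarith
              nlinarith
          _ = ((⨆ z, f z) - (⨅ z, f z)) * M := by rw [← hm]; ring

theorem stmt15 (hcard : 2 ≤ Fintype.card X)
    (T : (X → ℝ) → (X → ℝ)) (hT : IsLTO T) :
    sSup {r | ∃ (A : Finset X) (x y : X), A.Nonempty ∧ A ≠ Finset.univ ∧
        r = T (fun z => if z ∈ A then 1 else 0) x - T (fun z => if z ∈ A then 1 else 0) y}
      ≤ coeffErg T ∧
    coeffErg T ≤
      sSup {r | ∃ (A : Finset X) (x y : X), A.Nonempty ∧ A ≠ Finset.univ ∧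
        r = -T (-(fun z => if z ∈ A then (1:ℝ) else 0)) x
            - T (fun z => if z ∈ A then 1 else 0) y} := by
  classical
  -- basic bounds for T f when 0 ≤ f ≤ 1
  have hTub : ∀ f : X → ℝ, (∀ z, 0 ≤ f z ∧ f z ≤ 1) → ∀ w, T f w ≤ 1 ∧ 0 ≤ T f w := by
    intro f hf w
    constructor
    · have h1 : -(1:ℝ) ≤ T (-f) w := lto_ge_inf hT (-f) w (fun z => by
        simp only [Pi.neg_apply]; linarith [(hf z).2])
      have := lto_conj hT f w
      linarith
    · exact lto_ge_inf hT f w (fun z => (hf z).1)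
  -- the coeffErg defining set
  set S : Set ℝ := {r | ∃ f : X → ℝ, (∀ x, 0 ≤ f x ∧ f x ≤ 1) ∧ r = varNorm (T f)} with hS
  have hSbdd : ∀ r ∈ S, r ≤ 1 := by
    rintro r ⟨f, hf, rfl⟩
    have hub : (⨆ z, T f z) ≤ 1 := ciSup_le fun z => (hTub f hf z).1
    have hlb : (0:ℝ) ≤ ⨅ z, T f z := le_ciInf fun z => (hTub f hf z).2
    simp only [varNorm]; linarith
  have hSbddAbove : BddAbove S := ⟨1, hSbdd⟩
  have hSne0 : (0:ℝ) ∈ S := by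
    refine ⟨0, fun x => ⟨le_rfl, zero_le_one⟩, ?_⟩
    rw [lto_zero hT]
    simp [varNorm, ciSup_const, ciInf_const]
  have hcoeff0 : 0 ≤ coeffErg T := le_csSup hSbddAbove hSne0
  -- the RHS set
  set SR : Set ℝ := {r | ∃ (A : Finset X) (x y : X), A.Nonempty ∧ A ≠ Finset.univ ∧
        r = -T (-(fun z => if z ∈ A then (1:ℝ) else 0)) x
            - T (fun z => if z ∈ A then 1 else 0) y} with hSR
  have hSRbdd : ∀ r ∈ SR, r ≤ 1 := by
    rintro r ⟨A, x, y, hAne, hAu, rfl⟩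
    have h1 : -(1:ℝ) ≤ T (-(fun z => if z ∈ A then (1:ℝ) else 0)) x :=
      lto_ge_inf hT _ x (fun z => by
        simp only [Pi.neg_apply]
        split <;> norm_num)
    have h2 : (0:ℝ) ≤ T (fun z => if z ∈ A then (1:ℝ) else 0) y :=
      lto_ge_inf hT _ y (fun z => by split <;> norm_num)
    linarith
  have hSRbddAbove : BddAbove SR := ⟨1, hSRbdd⟩
  -- SR contains a nonnegative element
  obtain ⟨x0⟩ := (inferInstance : Nonempty X)
  obtain ⟨x1, hx1⟩ := Fintype.exists_ne_of_one_lt_card (by omega) x0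
  have hsingprop : ({x0} : Finset X) ≠ Finset.univ := by
    intro h
    have := h ▸ Finset.mem_univ x1
    simp at this
    exact hx1 this
  have hM0 : 0 ≤ sSup SR := by
    have hmem : -T (-(fun z => if z ∈ ({x0} : Finset X) then (1:ℝ) else 0)) x0
            - T (fun z => if z ∈ ({x0} : Finset X) then (1:ℝ) else 0) x0 ∈ SR :=
      ⟨{x0}, x0, x0, Finset.singleton_nonempty x0, hsingprop, rfl⟩
    have hge : (0:ℝ) ≤ -T (-(fun z => if z ∈ ({x0} : Finset X) then (1:ℝ) else 0)) x0
            - T (fun z => if z ∈ ({x0} : Finset X) then (1:ℝ) else 0) x0 := by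
      have := lto_conj hT (fun z => if z ∈ ({x0} : Finset X) then (1:ℝ) else 0) x0
      linarith
    exact le_trans hge (le_csSup hSRbddAbove hmem)
  constructor
  · -- lower bound
    apply Real.sSup_le _ hcoeff0
    rintro r ⟨A, x, y, hAne, hAu, rfl⟩
    set indA : X → ℝ := fun z => if z ∈ A then 1 else 0 with hindA
    have hsup : T indA x ≤ ⨆ z, T indA z := le_ciSup (Finite.bddAbove_range _) x
    have hinf : (⨅ z, T indA z) ≤ T indA y := ciInf_le (Finite.bddBelow_range _) y
    have hmem : varNorm (T indA) ∈ S := by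
      refine ⟨indA, fun z => ?_, rfl⟩
      constructor <;> simp only [hindA] <;> split <;> norm_num
    have hle := le_csSup hSbddAbove hmem
    have hcs : coeffErg T = sSup S := rfl
    rw [hcs]
    simp only [varNorm] at hle ⊢
    linarith
  · -- upper bound
    have hcs : coeffErg T = sSup S := rfl
    rw [hcs, hS]
    apply Real.sSup_le _ hM0
    rintro r ⟨f, hf, rfl⟩
    obtain ⟨xM, hxM⟩ := Finite.exists_max (T f)
    obtain ⟨yM, hyM⟩ := Finite.exists_min (T f)
    have hsup : (⨆ z, T f z) ≤ T f xM := ciSup_le hxM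
    have hinf : T f yM ≤ ⨅ z, T f z := le_ciInf hyM
    have hkey := key_aux hT hM0
      (fun A x y hAne hAu => le_csSup hSRbddAbove ⟨A, x, y, hAne, hAu, rfl⟩)
      xM yM (Finset.image f Finset.univ).card f le_rfl (fun z => (hf z).1)
    have hconj := lto_conj hT f xM
    have hfv : (⨆ z, f z) - (⨅ z, f z) ≤ 1 := by
      have h1 : (⨆ z, f z) ≤ 1 := ciSup_le fun z => (hf z).2
      have h2 : (0:ℝ) ≤ ⨅ z, f z := le_ciInf fun z => (hf z).1
      linarith
    have hmul : ((⨆ z, f z) - (⨅ z, f z)) * sSup SR ≤ 1 * sSup SR :=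
      mul_le_mul_of_nonneg_right hfv hM0
    simp only [varNorm]
    nlinarith
end

section
/- Let T̲₁, T̲₂ be lower transition operators on a finite state space, let f ∈ ℒ(𝒳), t ∈ ℝ, ε ∈ ℝ with ε > 0, and suppose g := T̲₂ f satisfies: ‖h − g‖ ≤ ε' for some function h ∈ ℒ(𝒳) with ε' ≤ ε, and ‖g‖_v ≤ ε − ε'. Then for any lower transition operator S̲, ‖S̲ h − g‖ ≤ ε. (Bounding the error of an approximation whose variation has collapsed: if h is within ε' of g and the variation of g is at most ε − ε', then applying any further lower transition operator to h stays within ε of g.) -/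
open scoped BigOperators

variable {X : Type*} [Fintype X] [Nonempty X] [DecidableEq X]

theorem stmt19 (T₁ T₂ S : (X → ℝ) → (X → ℝ))
    (hT₁ : IsLTO T₁) (hT₂ : IsLTO T₂) (hS : IsLTO S)
    (f h : X → ℝ) (t ε ε' : ℝ) (hε : 0 < ε) (hε' : ε' ≤ ε)
    (happrox : maxNorm (h - T₂ f) ≤ ε')
    (hvar : varNorm (T₂ f) ≤ ε - ε') :
    maxNorm (S h - T₂ f) ≤ ε := by
  classical
  set g := T₂ f with hg
  obtain ⟨hSmin, hSadd, hShom⟩ := hS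
  have hS0 : S 0 = 0 := by
    have := hShom 0 le_rfl 0
    simpa using this
  -- pointwise bound on h
  have hpt : ∀ x, |h x - g x| ≤ ε' := by
    intro x
    have : |h x - g x| ≤ ⨆ y, |(h - g) y| := by
      have := le_ciSup (f := fun y => |(h - g) y|) (Set.Finite.bddAbove (Set.finite_range _)) x
      simpa using this
    exact this.trans happrox
  set M := ⨆ y, g y with hM
  set m := ⨅ y, g y with hm
  have hMm : M - m ≤ ε - ε' := hvar
  have hgle : ∀ x, g x ≤ M := fun x =>
    le_ciSup (Set.Finite.bddAbove (Set.finite_range _)) x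
  have hgge : ∀ x, m ≤ g x := fun x =>
    ciInf_le (Set.Finite.bddBelow (Set.finite_range _)) x
  -- bounds on h
  have hub : ∀ x, h x ≤ M + ε' := by
    intro x
    have := hpt x
    have h1 : h x - g x ≤ ε' := (abs_le.mp this).2
    have := hgle x; linarith
  have hlb : ∀ x, m - ε' ≤ h x := by
    intro x
    have := hpt x
    have h1 : -ε' ≤ h x - g x := (abs_le.mp this).1
    have := hgge x; linarith
  -- S h bounds
  have hShlb : ∀ x, m - ε' ≤ S h x := by
    intro x
    refine le_trans (le_ciInf hlb) (hSmin h x)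
  have hShub : ∀ x, S h x ≤ M + ε' := by
    intro x
    have hadd := hSadd h (-h) x
    have : h + -h = 0 := by funext y; simp
    rw [this, hS0] at hadd
    have hneg : ⨅ y, (-h) y ≤ S (-h) x := hSmin (-h) x
    have hnegge : -(M + ε') ≤ ⨅ y, (-h) y := by
      refine le_ciInf fun y => ?_
      have := hub y; simp only [Pi.neg_apply]; linarith
    have : (0:ℝ) ≥ S h x + S (-h) x := by simpa using hadd
    linarith [hnegge.trans hneg]
  -- conclude
  refine ciSup_le fun x => ?_
  rw [abs_le]
  constructor
  · have := hShlb x; have := hgle x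
    simp only [Pi.sub_apply]; linarith
  · have := hShub x; have := hgge x
    simp only [Pi.sub_apply]; linarith
end
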